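/- arXiv:1011.1690 — 3 statements merged into one kernel-verified Lean document; each statement's English description precedes it below -/
import Mathlib

section
/- Flows of holomorphic vector fields are holomorphic: Let U, U' ⊆ ℂ be open sets with U' ⊆ U, let X : U → ℂ be holomorphic, let ε > 0, and let φ : (−ε, ε) × U' → ℂ be a smooth map such that for all τ ∈ (−ε, ε) and z ∈ U' one has φ(τ, z) ∈ U, ∂φ/∂τ(τ, z) = X(φ(τ, z)), and φ(0, z) = z. Then for every τ ∈ (−ε, ε) the map z ↦ φ(τ, z) is holomorphic on U'. -/
/-!
Differentiating the flow equation `∂ₜφ = X ∘ φ` in `z` shows that the ℝ-linear spatial derivative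
`∂_zφ(t, z)` solves the variational equation `∂ₜ ∂_zφ = X'(φ) ∘ ∂_zφ`. Since `X'(φ)` is
multiplication by a complex number, the Cauchy–Riemann defect of `φ(t, ·)` solves the same linear
ODE. It vanishes at `t = 0` because `φ(0, ·) = id`, hence for all `t` by uniqueness of solutions.
-/

open Set Complex Filter Topology

theorem eqOn_zero_of_hasDerivAt_clm_apply {E : Type*} [NormedAddCommGroup E] [NormedSpace ℝ E]
    {A : ℝ → E →L[ℝ] E} {f : ℝ → E} {a b t₀ : ℝ} (hA : ContinuousOn A (Ioo a b))
    (hf : ∀ t ∈ Ioo a b, HasDerivAt f (A t (f t)) t) (ht₀ : t₀ ∈ Ioo a b) (hf₀ : f t₀ = 0) :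
    EqOn f 0 (Ioo a b) := by
  intro t ht
  -- `A` need not be bounded on `Ioo a b`, so work on a compact subinterval containing `t, t₀`.
  obtain ⟨a', ha', ha'_lt⟩ := exists_between (lt_min ht.1 ht₀.1)
  obtain ⟨b', hb'_gt, hb'⟩ := exists_between (max_lt ht.2 ht₀.2)
  rw [lt_min_iff] at ha'_lt
  rw [max_lt_iff] at hb'_gt
  have hsub : Icc a' b' ⊆ Ioo a b := Icc_subset_Ioo ha' hb'
  obtain ⟨K, hK⟩ := isCompact_Icc.exists_bound_of_continuousOn (hA.mono hsub)
  have hlip : ∀ s ∈ Ioo a' b', LipschitzOnWith K.toNNReal (A s) univ := fun s hs =>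
    ((A s).lipschitz.weaken (by
      rw [← NNReal.coe_le_coe, Real.coe_toNNReal', coe_nnnorm]
      exact le_max_of_le_left (hK s (Ioo_subset_Icc_self hs)))).lipschitzOnWith
  exact ODE_solution_unique_of_mem_Ioo hlip (f := f) (g := fun _ => 0) ⟨ha'_lt.2, hb'_gt.2⟩
    (fun s hs => ⟨hf s (hsub (Ioo_subset_Icc_self hs)), mem_univ _⟩)
    (fun s _ => ⟨(hasDerivAt_const s (0 : E)).congr_deriv (map_zero _).symm, mem_univ _⟩) hf₀
    ⟨ha'_lt.1, hb'_gt.1⟩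

theorem hasDerivAt_fderiv_apply_inr_of_flow {E F : Type*} [NormedAddCommGroup E]
    [NormedSpace ℝ E] [NormedAddCommGroup F] [NormedSpace ℝ F] {φ : ℝ × E → F} {X : F → F}
    {X' : F →L[ℝ] F} {t : ℝ} {z : E} (hφ : ContDiffAt ℝ 2 φ (t, z))
    (hflow : ∀ᶠ q in 𝓝 (t, z), HasDerivAt (fun s => φ (s, q.2)) (X (φ q)) q.1)
    (hX : HasFDerivAt X X' (φ (t, z))) (w : E) :
    HasDerivAt (fun s => fderiv ℝ φ (s, z) (0, w)) (X' (fderiv ℝ φ (t, z) (0, w))) t := by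
  have hline : ∀ q : ℝ × E, HasDerivAt (fun s : ℝ => (s, q.2)) (1, 0) q.1 := fun q =>
    (hasDerivAt_id _).prodMk (hasDerivAt_const _ _)
  have hD2 : HasFDerivAt (fderiv ℝ φ) (fderiv ℝ (fderiv ℝ φ) (t, z)) (t, z) :=
    ((hφ.fderiv_right (m := 1) (by norm_num)).differentiableAt one_ne_zero).hasFDerivAt
  have htime : (fun q => fderiv ℝ φ q (1, 0)) =ᶠ[𝓝 (t, z)] fun q => X (φ q) := by
    filter_upwards [hflow, hφ.eventually (by simp)] with q hq hφq
    exact ((hφq.differentiableAt two_ne_zero).hasFDerivAt.comp_hasDerivAt q.1 (hline q)).unique hq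
  have hmixed : fderiv ℝ (fderiv ℝ φ) (t, z) (0, w) (1, 0) = X' (fderiv ℝ φ (t, z) (0, w)) := by
    have h₁ := hD2.clm_apply (hasFDerivAt_const ((1, 0) : ℝ × E) (t, z))
    have h₂ := (hX.comp (t, z) (hφ.differentiableAt two_ne_zero).hasFDerivAt).congr_of_eventuallyEq
      htime
    simpa only [add_apply, ContinuousLinearMap.comp_zero, ContinuousLinearMap.comp_apply,
      zero_apply, ContinuousLinearMap.flip_apply, zero_add] using congr($(h₁.unique h₂) (0, w))
  have hsymm := hφ.isSymmSndFDerivAt (by simp) (1, 0) (0, w)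
  have hcurve : HasDerivAt (fun s => fderiv ℝ φ (s, z)) (fderiv ℝ (fderiv ℝ φ) (t, z) (1, 0)) t :=
    hD2.comp_hasDerivAt t (hline (t, z))
  have h := hcurve.clm_apply (hasDerivAt_const t ((0, w) : ℝ × E))
  rwa [map_zero, add_zero, hsymm, hmixed] at h

theorem fderiv_apply_inr_of_eventually_eq_id {𝕜 E F : Type*} [NontriviallyNormedField 𝕜]
    [NormedAddCommGroup E] [NormedSpace 𝕜 E] [NormedAddCommGroup F] [NormedSpace 𝕜 F]
    {φ : E × F → F} {x : E} {z : F} (hφ : DifferentiableAt 𝕜 φ (x, z))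
    (hid : ∀ᶠ w in 𝓝 z, φ (x, w) = w) (w : F) :
    fderiv 𝕜 φ (x, z) (0, w) = w := by
  have hslice := hφ.hasFDerivAt.comp z (hasFDerivAt_prodMk_right x z)
  have h := hslice.unique ((hasFDerivAt_id z).congr_of_eventuallyEq hid)
  simpa using congr($h w)

/-- Equals `-2i ∂φ/∂z̄` at `p`: it vanishes iff `w ↦ Dφ(p)(0, w)` is `ℂ`-linear. -/
noncomputable def cauchyRiemannDefect (φ : ℝ × ℂ → ℂ) (p : ℝ × ℂ) : ℂ :=
  fderiv ℝ φ p (0, I) - I • fderiv ℝ φ p (0, 1)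

theorem hasDerivAt_cauchyRiemannDefect {φ : ℝ × ℂ → ℂ} {X : ℂ → ℂ} {t : ℝ} {z : ℂ}
    (hφ : ContDiffAt ℝ 2 φ (t, z))
    (hflow : ∀ᶠ q in 𝓝 (t, z), HasDerivAt (fun s => φ (s, q.2)) (X (φ q)) q.1)
    (hX : DifferentiableAt ℂ X (φ (t, z))) :
    HasDerivAt (fun s => cauchyRiemannDefect φ (s, z))
      (fderiv ℂ X (φ (t, z)) (cauchyRiemannDefect φ (t, z))) t := by
  have hvar := hasDerivAt_fderiv_apply_inr_of_flow hφ hflow (hX.hasFDerivAt.restrictScalars ℝ)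
  refine ((hvar I).sub ((hvar 1).const_smul I)).congr_deriv ?_
  simp only [cauchyRiemannDefect, ContinuousLinearMap.coe_restrictScalars', map_sub, map_smul]

theorem differentiableAt_of_cauchyRiemannDefect_eq_zero {φ : ℝ × ℂ → ℂ} {t : ℝ} {z : ℂ}
    (hφ : DifferentiableAt ℝ φ (t, z)) (h : cauchyRiemannDefect φ (t, z) = 0) :
    DifferentiableAt ℂ (fun w => φ (t, w)) z := by
  have hslice := hφ.hasFDerivAt.comp z (hasFDerivAt_prodMk_right t z)
  refine (hslice.complexOfReal_hasFDerivAt ?_).differentiableAt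
  simpa [cauchyRiemannDefect, sub_eq_zero] using h

theorem flow_of_holomorphic_vector_field_is_holomorphic_general
    (U U' : Set ℂ) (hU : IsOpen U) (hU' : IsOpen U')
    (X : ℂ → ℂ) (hX : DifferentiableOn ℂ X U)
    (ε : ℝ) (hε : 0 < ε)
    (φ : ℝ × ℂ → ℂ)
    (hφsmooth : ContDiffOn ℝ (⊤ : ℕ∞) φ ((Ioo (-ε) ε) ×ˢ U'))
    (hmem : ∀ τ ∈ Ioo (-ε) ε, ∀ z ∈ U', φ (τ, z) ∈ U)
    (hode : ∀ τ ∈ Ioo (-ε) ε, ∀ z ∈ U',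
      HasDerivAt (fun t : ℝ => φ (t, z)) (X (φ (τ, z))) τ)
    (hinit : ∀ z ∈ U', φ (0, z) = z) :
    ∀ τ ∈ Ioo (-ε) ε, DifferentiableOn ℂ (fun z => φ (τ, z)) U' := by
  intro τ hτ z hz
  have hΩ : IsOpen (Ioo (-ε) ε ×ˢ U') := isOpen_Ioo.prod hU'
  have hC2 : ∀ t ∈ Ioo (-ε) ε, ContDiffAt ℝ 2 φ (t, z) := fun t ht =>
    (hφsmooth.contDiffAt (hΩ.mem_nhds ⟨ht, hz⟩)).of_le (by norm_cast)
  have hcoeff : ContinuousOn (fun t => (fderiv ℂ X (φ (t, z))).restrictScalars ℝ)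
      (Ioo (-ε) ε) := by
    have hX' : ContinuousOn (fderiv ℂ X) U :=
      (hX.contDiffOn hU (n := 1)).continuousOn_fderiv_of_isOpen hU le_rfl
    have hcurve : ContinuousOn (fun t => φ (t, z)) (Ioo (-ε) ε) := fun t ht =>
      (hode t ht z hz).continuousAt.continuousWithinAt
    exact (ContinuousLinearMap.restrictScalarsL ℂ ℂ ℂ ℝ ℝ).continuous.comp_continuousOn
      (hX'.comp hcurve fun t ht => hmem t ht z hz)
  have hdefect : ∀ t ∈ Ioo (-ε) ε, HasDerivAt (fun s => cauchyRiemannDefect φ (s, z))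
      (fderiv ℂ X (φ (t, z)) (cauchyRiemannDefect φ (t, z))) t := fun t ht =>
    hasDerivAt_cauchyRiemannDefect (hC2 t ht)
      (by filter_upwards [hΩ.mem_nhds ⟨ht, hz⟩] with q hq using hode q.1 hq.1 q.2 hq.2)
      (hX.differentiableAt (hU.mem_nhds (hmem t ht z hz)))
  have h0 : (0 : ℝ) ∈ Ioo (-ε) ε := ⟨neg_lt_zero.2 hε, hε⟩
  have hdefect₀ : cauchyRiemannDefect φ (0, z) = 0 := by
    have hid := fderiv_apply_inr_of_eventually_eq_id ((hC2 0 h0).differentiableAt two_ne_zero)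
      (eventually_of_mem (hU'.mem_nhds hz) hinit)
    simp [cauchyRiemannDefect, hid]
  exact (differentiableAt_of_cauchyRiemannDefect_eq_zero
    ((hC2 τ hτ).differentiableAt two_ne_zero)
    (eqOn_zero_of_hasDerivAt_clm_apply hcoeff hdefect h0 hdefect₀ hτ)).differentiableWithinAt

/-- **Flows of holomorphic vector fields are holomorphic.**  Let `U' ⊆ U ⊆ ℂ` be open,
`X : U → ℂ` holomorphic, `ε > 0`, and `φ : (−ε, ε) × U' → ℂ` a smooth map with
`φ(τ, z) ∈ U`, `∂φ/∂τ(τ, z) = X(φ(τ, z))` and `φ(0, z) = z`.  Then each map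
`z ↦ φ(τ, z)` is holomorphic on `U'`. -/
theorem flow_of_holomorphic_vector_field_is_holomorphic
    (U U' : Set ℂ) (hU : IsOpen U) (hU' : IsOpen U') (hsub : U' ⊆ U)
    (X : ℂ → ℂ) (hX : DifferentiableOn ℂ X U)
    (ε : ℝ) (hε : 0 < ε)
    (φ : ℝ × ℂ → ℂ)
    (hφsmooth : ContDiffOn ℝ (⊤ : ℕ∞) φ ((Ioo (-ε) ε) ×ˢ U'))
    (hmem : ∀ τ ∈ Ioo (-ε) ε, ∀ z ∈ U', φ (τ, z) ∈ U)
    (hode : ∀ τ ∈ Ioo (-ε) ε, ∀ z ∈ U',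
      HasDerivAt (fun t : ℝ => φ (t, z)) (X (φ (τ, z))) τ)
    (hinit : ∀ z ∈ U', φ (0, z) = z) :
    ∀ τ ∈ Ioo (-ε) ε, DifferentiableOn ℂ (fun z => φ (τ, z)) U' :=
  flow_of_holomorphic_vector_field_is_holomorphic_general U U' hU hU' X hX ε hε φ hφsmooth hmem hode
    hinit
end

section
/- Existence and contractibility of compatible complex structures on a symplectic vector space: Let V be a finite-dimensional real vector space and ω a nondegenerate alternating bilinear form on V. Let 𝒥(V,ω) denote the set of linear maps J : V → V with J ∘ J = −id such that the bilinear form g_J(v,w) := ω(v, Jw) is symmetric and positive definite, topologized as a subspace of the space of linear endomorphisms of V. Then 𝒥(V,ω) is nonempty and contractible. -/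
/-!
Fix one compatible `J₀` and put `g = ω(·, J₀ ·)`. Every compatible `J` is `J₀ P` for a unique
`g`-symmetric positive definite `P` with `P J₀ P = J₀`, and the Cayley transform
`P ↦ (1 - P)(1 + P)⁻¹`, an involution, identifies these `P` with the `g`-symmetric strict
contractions anticommuting with `J₀`: a set that is star-shaped about `0`.

A first `J₀` exists because if `ω` has the (skew, invertible) Gram matrix `M`, then
`K = -M (MᵀM)^(-1/2)` satisfies `K² = -1` and `M K = (MᵀM)^(1/2)`, which is positive definite.
-/

section Cayley

variable {R : Type*} [Ring R] {x : R}

noncomputable def cayley (x : R) : R :=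
  (1 - x) * Ring.inverse (1 + x)

theorem cayley_mul_one_add (hx : IsUnit (1 + x)) : cayley x * (1 + x) = 1 - x := by
  rw [cayley, mul_assoc, Ring.inverse_mul_cancel _ hx, mul_one]

theorem one_add_mul_cayley (hx : IsUnit (1 + x)) : (1 + x) * cayley x = 1 - x := by
  rw [cayley, ← mul_assoc, show (1 + x) * (1 - x) = (1 - x) * (1 + x) by noncomm_ring, mul_assoc,
    Ring.mul_inverse_cancel _ hx, mul_one]

theorem one_add_cayley_mul_one_add (hx : IsUnit (1 + x)) : (1 + cayley x) * (1 + x) = 2 := by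
  rw [add_mul, one_mul, cayley_mul_one_add hx, add_add_sub_cancel, one_add_one_eq_two]

theorem isUnit_one_add_cayley (h2 : IsUnit (2 : R)) (hx : IsUnit (1 + x)) :
    IsUnit (1 + cayley x) := by
  rwa [← Units.isUnit_mul_units _ hx.unit, IsUnit.unit_spec, one_add_cayley_mul_one_add hx]

theorem cayley_cayley (h2 : IsUnit (2 : R)) (hx : IsUnit (1 + x)) : cayley (cayley x) = x := by
  rw [← h2.mul_left_inj]
  calc cayley (cayley x) * 2 = cayley (cayley x) * (1 + cayley x) * (1 + x) := by
        rw [mul_assoc, one_add_cayley_mul_one_add hx]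
    _ = (1 - cayley x) * (1 + x) := by rw [cayley_mul_one_add (isUnit_one_add_cayley h2 hx)]
    _ = x * 2 := by rw [sub_mul, one_mul, cayley_mul_one_add hx]; noncomm_ring

theorem cayley_mul_eq_neg_mul_cayley {j : R} (hx : IsUnit (1 + x)) (h : x * j * x = j) :
    cayley x * j = -(j * cayley x) := by
  have key : (1 + x) * (cayley x * j + j * cayley x) * (1 + x) = 0 := calc
    _ = (1 + x) * cayley x * j * (1 + x) + (1 + x) * j * (cayley x * (1 + x)) := by noncomm_ring
    _ = 2 * (j - x * j * x) := by
      rw [one_add_mul_cayley hx, cayley_mul_one_add hx]; noncomm_ring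
    _ = 0 := by rw [h, sub_self, mul_zero]
  rw [hx.mul_left_eq_zero, hx.mul_right_eq_zero] at key
  exact eq_neg_of_add_eq_zero_left key

theorem cayley_mul_mul_cayley {j : R} (hx : IsUnit (1 + x)) (h : x * j = -(j * x)) :
    cayley x * j * cayley x = j := by
  have key : (1 + x) * (cayley x * j * cayley x - j) * (1 + x) = 0 := calc
    _ = (1 + x) * cayley x * j * (cayley x * (1 + x)) - (1 + x) * j * (1 + x) := by noncomm_ring
    _ = -2 * (x * j + j * x) := by
      rw [one_add_mul_cayley hx, cayley_mul_one_add hx]; noncomm_ring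
    _ = 0 := by rw [h, neg_add_cancel, mul_zero]
  rwa [hx.mul_left_eq_zero, hx.mul_right_eq_zero, sub_eq_zero] at key

theorem continuousOn_cayley {R : Type*} [NormedRing R] [HasSummableGeomSeries R] :
    ContinuousOn cayley {x : R | IsUnit (1 + x)} := fun x hx => by
  have hinv := NormedRing.inverse_continuousAt hx.unit
  rw [IsUnit.unit_spec] at hinv
  exact ((continuousAt_const.sub continuousAt_id).mul
    (hinv.comp (continuousAt_const.add continuousAt_id))).continuousWithinAt

end Cayley

theorem mul_mul_self_eq_neg_one_iff {R : Type*} [Ring R] {j p : R} (hj : j * j = -1) :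
    j * p * (j * p) = -1 ↔ p * j * p = j := by
  constructor <;> intro h
  · have := congrArg (j * ·) h
    simpa only [← mul_assoc, hj, neg_one_mul, neg_mul, mul_neg, mul_one, neg_inj, one_mul]
      using this
  · calc j * p * (j * p) = j * (p * j * p) := by simp only [mul_assoc]
      _ = -1 := by rw [h, hj]

theorem isUnit_two_of_algebra {A : Type*} [Ring A] [Algebra ℝ A] : IsUnit (2 : A) := by
  simpa only [map_ofNat] using (isUnit_iff_ne_zero.2 (two_ne_zero' ℝ)).map (algebraMap ℝ A)

theorem ContinuousLinearMap.isUnit_of_injective {𝕜 V : Type*} [NontriviallyNormedField 𝕜]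
    [CompleteSpace 𝕜] [NormedAddCommGroup V] [NormedSpace 𝕜 V] [FiniteDimensional 𝕜 V]
    {X : V →L[𝕜] V} (hX : Function.Injective X) : IsUnit X :=
  haveI := FiniteDimensional.complete 𝕜 V
  isUnit_iff_bijective.2 ⟨hX, LinearMap.injective_iff_surjective (f := (X : V →ₗ[𝕜] V)).1 hX⟩

def IsSymmPosDef {V : Type*} [Zero V] (b : V → V → ℝ) : Prop :=
  (∀ v w, b v w = b w v) ∧ ∀ v, v ≠ 0 → 0 < b v v

theorem isSymmPosDef_comp_iff {V : Type*} [Zero V] {b : V → V → ℝ} {U : V → V}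
    (hU : Function.Bijective U) (hU0 : U 0 = 0) :
    (IsSymmPosDef fun v w => b (U v) (U w)) ↔ IsSymmPosDef b := by
  have hne : ∀ v, U v ≠ 0 ↔ v ≠ 0 := fun v => by
    rw [Ne, Ne, ← hU.1.eq_iff (a := v) (b := 0), hU0]
  refine and_congr ⟨fun h v w => ?_, fun h v w => h _ _⟩ ⟨fun h v hv => ?_, fun h v hv => ?_⟩
  · obtain ⟨v, rfl⟩ := hU.2 v
    obtain ⟨w, rfl⟩ := hU.2 w
    exact h v w
  · obtain ⟨v, rfl⟩ := hU.2 v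
    exact h v ((hne v).1 hv)
  · exact h _ ((hne v).2 hv)

section SiegelDisk

variable {V : Type*} [NormedAddCommGroup V] [NormedSpace ℝ V]
  {g : V →ₗ[ℝ] V →ₗ[ℝ] ℝ} {J₀ X P S : V →L[ℝ] V}

theorem form_one_add_cayley_one_add (hg : ∀ v w, g v w = g w v)
    (hX : ∀ v w, g v (X w) = g w (X v)) (hX1 : IsUnit (1 + X)) (v w : V) :
    g ((1 + X) v) (cayley X ((1 + X) w)) = g v w - g (X v) (X w) := by
  rw [← mul_apply_eq_comp, cayley_mul_one_add hX1]
  simp only [add_apply, sub_apply, one_apply_eq_self, map_add, map_sub, LinearMap.add_apply]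
  rw [hg (X v) w, hX w v]
  ring

theorem cayley_symm [CompleteSpace V] (hg : ∀ v w, g v w = g w v)
    (hX : ∀ v w, g v (X w) = g w (X v)) (hX1 : IsUnit (1 + X)) (v w : V) :
    g v (cayley X w) = g w (cayley X v) := by
  have hU := (ContinuousLinearMap.isUnit_iff_bijective.1 hX1).2
  obtain ⟨v, rfl⟩ := hU v
  obtain ⟨w, rfl⟩ := hU w
  rw [form_one_add_cayley_one_add hg hX hX1, form_one_add_cayley_one_add hg hX hX1, hg,
    hg (X v)]

theorem isSymmPosDef_cayley_iff [CompleteSpace V] (hg : ∀ v w, g v w = g w v)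
    (hX : ∀ v w, g v (X w) = g w (X v)) (hX1 : IsUnit (1 + X)) :
    (IsSymmPosDef fun v w => g v (cayley X w)) ↔ ∀ v, v ≠ 0 → g (X v) (X v) < g v v := by
  rw [← isSymmPosDef_comp_iff (ContinuousLinearMap.isUnit_iff_bijective.1 hX1) (map_zero _)]
  simp only [IsSymmPosDef, form_one_add_cayley_one_add hg hX hX1, sub_pos]
  exact and_iff_right fun v w => by rw [hg, hg (X v)]

theorem isUnit_one_add_of_isSymmPosDef [FiniteDimensional ℝ V] (hg : ∀ v, v ≠ 0 → 0 < g v v)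
    (hP : IsSymmPosDef fun v w => g v (P w)) : IsUnit (1 + P) := by
  refine ContinuousLinearMap.isUnit_of_injective ((injective_iff_map_eq_zero _).2 fun v hv => ?_)
  by_contra hv0
  have hPv : P v = -v := eq_neg_of_add_eq_zero_right hv
  have := hP.2 v hv0
  simp only [hPv, map_neg, neg_pos] at this
  exact (hg v hv0).not_gt this

/-- For `g = ω(·, J₀ ·)` with `J₀² = -1`, the condition `P J₀ P = J₀` says that the
`g`-symmetric map `P` preserves `ω`. -/
def posSymplectic (g : V →ₗ[ℝ] V →ₗ[ℝ] ℝ) (J₀ : V →L[ℝ] V) : Set (V →L[ℝ] V) :=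
  {P | P * J₀ * P = J₀ ∧ IsSymmPosDef fun v w => g v (P w)}

/-- In complex terms (`J₀` as `i`), these `S` are the antilinear symmetric strict contractions,
i.e. the Siegel disc of complex symmetric matrices of operator norm `< 1`. -/
def siegelDisk (g : V →ₗ[ℝ] V →ₗ[ℝ] ℝ) (J₀ : V →L[ℝ] V) : Set (V →L[ℝ] V) :=
  {S | S * J₀ = -(J₀ * S) ∧ (∀ v w, g v (S w) = g w (S v)) ∧
    ∀ v, v ≠ 0 → g (S v) (S v) < g v v}

theorem isUnit_one_add_of_mem_siegelDisk [FiniteDimensional ℝ V] (hS : S ∈ siegelDisk g J₀) :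
    IsUnit (1 + S) := by
  refine ContinuousLinearMap.isUnit_of_injective ((injective_iff_map_eq_zero _).2 fun v hv => ?_)
  by_contra hv0
  have hSv : S v = -v := eq_neg_of_add_eq_zero_right hv
  have := hS.2.2 v hv0
  simp [hSv] at this

theorem zero_mem_siegelDisk (hg : ∀ v, v ≠ 0 → 0 < g v v) : 0 ∈ siegelDisk g J₀ :=
  ⟨by simp, by simp, by simpa using hg⟩

theorem starConvex_siegelDisk (hg : ∀ v, v ≠ 0 → 0 < g v v) :
    StarConvex ℝ 0 (siegelDisk g J₀) := by
  rintro S ⟨hSJ, hSsym, hS⟩ a b ha hb hab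
  rw [smul_zero, zero_add]
  refine ⟨by rw [smul_mul_assoc, hSJ, mul_smul_comm, smul_neg], fun v w => ?_, fun v hv => ?_⟩
  · simp only [smul_apply, map_smul, hSsym v w]
  · have hSv : 0 ≤ g (S v) (S v) := by
      rcases eq_or_ne (S v) 0 with h | h
      · simp [h]
      · exact (hg _ h).le
    have hb1 : b ≤ 1 := by linarith
    simp only [smul_apply, map_smul, LinearMap.smul_apply, smul_eq_mul]
    nlinarith [hS v hv, mul_le_mul_of_nonneg_right (mul_le_one₀ hb1 hb hb1) hSv]

theorem contractibleSpace_siegelDisk (hg : ∀ v, v ≠ 0 → 0 < g v v) :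
    ContractibleSpace (siegelDisk g J₀) :=
  (starConvex_siegelDisk hg).contractibleSpace ⟨0, zero_mem_siegelDisk hg⟩

theorem cayley_mem_siegelDisk [FiniteDimensional ℝ V] (hg : IsSymmPosDef fun v w => g v w)
    (hP : P ∈ posSymplectic g J₀) : cayley P ∈ siegelDisk g J₀ := by
  have hP1 := isUnit_one_add_of_isSymmPosDef hg.2 hP.2
  have hS1 := isUnit_one_add_cayley isUnit_two_of_algebra hP1
  have hSsym := cayley_symm hg.1 hP.2.1 hP1
  refine ⟨cayley_mul_eq_neg_mul_cayley hP1 hP.1, hSsym, ?_⟩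
  rw [← isSymmPosDef_cayley_iff hg.1 hSsym hS1, cayley_cayley isUnit_two_of_algebra hP1]
  exact hP.2

theorem cayley_mem_posSymplectic [FiniteDimensional ℝ V] (hg : IsSymmPosDef fun v w => g v w)
    (hS : S ∈ siegelDisk g J₀) : cayley S ∈ posSymplectic g J₀ :=
  have hS1 := isUnit_one_add_of_mem_siegelDisk hS
  ⟨cayley_mul_mul_cayley hS1 hS.1, (isSymmPosDef_cayley_iff hg.1 hS.2.1 hS1).2 hS.2.2⟩

noncomputable def posSymplecticHomeomorphSiegelDisk [FiniteDimensional ℝ V]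
    (hg : IsSymmPosDef fun v w => g v w) : posSymplectic g J₀ ≃ₜ siegelDisk g J₀ where
  toFun P := ⟨cayley P, cayley_mem_siegelDisk hg P.2⟩
  invFun S := ⟨cayley S, cayley_mem_posSymplectic hg S.2⟩
  left_inv P := Subtype.ext <|
    cayley_cayley isUnit_two_of_algebra (isUnit_one_add_of_isSymmPosDef hg.2 P.2.2)
  right_inv S := Subtype.ext <|
    cayley_cayley isUnit_two_of_algebra (isUnit_one_add_of_mem_siegelDisk S.2)
  continuous_toFun := (continuousOn_cayley.comp_continuous continuous_subtype_val
    fun P => isUnit_one_add_of_isSymmPosDef hg.2 P.2.2).subtype_mk _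
  continuous_invFun := (continuousOn_cayley.comp_continuous continuous_subtype_val
    fun S => isUnit_one_add_of_mem_siegelDisk S.2).subtype_mk _

end SiegelDisk

open Matrix in
open scoped MatrixOrder in
theorem Matrix.exists_mul_self_eq_neg_one_posDef {n : Type*} [Fintype n] [DecidableEq n]
    {M : Matrix n n ℝ} (hM : Mᵀ = -M) (hdet : M.det ≠ 0) :
    ∃ K : Matrix n n ℝ, K * K = -1 ∧ (M * K).PosDef := by
  have hP : (Mᵀ * M).PosDef := by
    simpa [conjTranspose_eq_transpose_of_trivial] using PosDef.conjTranspose_mul_self M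
      (mulVec_injective_iff_isUnit.2 ((isUnit_iff_isUnit_det M).2 hdet.isUnit))
  have hQQ : CFC.sqrt (Mᵀ * M) * CFC.sqrt (Mᵀ * M) = Mᵀ * M :=
    CFC.sqrt_mul_sqrt_self _ hP.posSemidef.nonneg
  have hQ : (CFC.sqrt (Mᵀ * M)).PosDef :=
    (CFC.sqrt_nonneg _).posSemidef.posDef_iff_isUnit.2
      (isUnit_of_mul_isUnit_left (hQQ ▸ hP.isUnit))
  have hMQ : Commute M (CFC.sqrt (Mᵀ * M)) := by
    rw [CFC.sqrt_eq_cfc, hM, neg_mul]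
    exact (Commute.cfc_nnreal ((Commute.refl M).mul_left (Commute.refl M)).neg_left _).symm
  set Q := CFC.sqrt (Mᵀ * M)
  have hMQi : Commute M Q⁻¹ := by
    simpa [coe_units_inv] using hMQ.units_inv_right (u := hQ.isUnit.unit)
  have hQi : Q * Q⁻¹ = 1 := mul_nonsing_inv Q ((isUnit_iff_isUnit_det Q).1 hQ.isUnit)
  refine ⟨-(M * Q⁻¹), ?_, ?_⟩
  · calc -(M * Q⁻¹) * -(M * Q⁻¹) = -(Mᵀ * M * (Q⁻¹ * Q⁻¹)) := by
          rw [neg_mul_neg, mul_assoc, ← mul_assoc Q⁻¹, ← hMQi.eq, hM]; noncomm_ring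
      _ = -1 := by rw [← hQQ, mul_assoc, ← mul_assoc Q Q⁻¹, hQi, one_mul, hQi]
  · convert hQ using 1
    rw [mul_neg, ← mul_assoc, ← neg_mul, ← neg_mul, ← hM, ← hQQ, mul_assoc, hQi, mul_one]

theorem exists_linearMap_compatible {V : Type*} [AddCommGroup V] [Module ℝ V]
    [FiniteDimensional ℝ V] {ω : LinearMap.BilinForm ℝ V} (hω : ω.IsAlt)
    (hω' : ω.SeparatingLeft) :
    ∃ J : V →ₗ[ℝ] V, (∀ v, J (J v) = -v) ∧ IsSymmPosDef fun v w => ω v (J w) := by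
  let b := Module.finBasis ℝ V
  set M := LinearMap.BilinForm.toMatrix b ω
  have hM : M.transpose = -M := by
    ext i j
    simpa [M] using (LinearMap.IsAlt.neg hω (b i) (b j)).symm
  have hdet : M.det ≠ 0 := Matrix.separatingLeft_iff_det_ne_zero.1
    ((LinearMap.BilinForm.separatingLeft_toMatrix_iff b).2 hω')
  obtain ⟨K, hKK, hMK⟩ := Matrix.exists_mul_self_eq_neg_one_posDef hM hdet
  have hB : LinearMap.BilinForm.toMatrix b (ω.compRight (Matrix.toLin b b K)) = M * K := by
    rw [LinearMap.BilinForm.toMatrix_compRight, LinearMap.toMatrix_toLin]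
  have hBsymm := (LinearMap.BilinForm.isSymm_toMatrix_iff_isSymm b).1
    (hB ▸ Matrix.isHermitian_iff_isSymm.1 hMK.isHermitian)
  have hBpos := (LinearMap.BilinForm.posDef_toQuadraticMap_iff_matrix b _ hBsymm).2 (hB ▸ hMK)
  refine ⟨Matrix.toLin b b K, fun v => ?_, fun v w => hBsymm.eq v w, fun v hv => hBpos v hv⟩
  rw [← LinearMap.comp_apply, ← Matrix.toLin_mul b b b, hKK]
  simp

section CompatibleComplexStructures

variable {V : Type*} [NormedAddCommGroup V] [NormedSpace ℝ V] {ω : V →ₗ[ℝ] V →ₗ[ℝ] ℝ}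
  {J₀ : V →L[ℝ] V}

def compatibleComplexStructures (ω : V →ₗ[ℝ] V →ₗ[ℝ] ℝ) : Set (V →L[ℝ] V) :=
  {J | (∀ v, J (J v) = -v) ∧ IsSymmPosDef fun v w => ω v (J w)}

theorem nonempty_compatibleComplexStructures [FiniteDimensional ℝ V] (hω : ω.IsAlt)
    (hω' : ω.SeparatingLeft) : (compatibleComplexStructures ω).Nonempty :=
  let ⟨J, hJ⟩ := exists_linearMap_compatible hω hω'
  ⟨LinearMap.toContinuousLinearMap J, hJ⟩

theorem ContinuousLinearMap.mul_self_eq_neg_one_iff {J : V →L[ℝ] V} :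
    J * J = -1 ↔ ∀ v, J (J v) = -v := by
  simp [ContinuousLinearMap.ext_iff]

theorem mul_mem_compatibleComplexStructures_iff (hJ₀ : J₀ * J₀ = -1) {P : V →L[ℝ] V} :
    J₀ * P ∈ compatibleComplexStructures ω ↔
      P ∈ posSymplectic (ω.compl₂ (J₀ : V →ₗ[ℝ] V)) J₀ := by
  refine and_congr ?_ Iff.rfl
  rw [← ContinuousLinearMap.mul_self_eq_neg_one_iff, mul_mul_self_eq_neg_one_iff hJ₀]

noncomputable def compatibleComplexStructuresHomeomorphPosSymplectic
    (hJ₀ : J₀ ∈ compatibleComplexStructures ω) :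
    compatibleComplexStructures ω ≃ₜ posSymplectic (ω.compl₂ (J₀ : V →ₗ[ℝ] V)) J₀ :=
  have hJ₀J₀ : J₀ * J₀ = -1 := ContinuousLinearMap.mul_self_eq_neg_one_iff.2 hJ₀.1
  Homeomorph.subtype
    { toFun := fun J => -(J₀ * J)
      invFun := fun P => J₀ * P
      left_inv := fun J => by simp [← mul_assoc, hJ₀J₀]
      right_inv := fun P => by simp [← mul_assoc, hJ₀J₀]
      continuous_toFun := by fun_prop
      continuous_invFun := by fun_prop }
    fun J => by
      rw [← mul_mem_compatibleComplexStructures_iff hJ₀J₀]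
      simp [← mul_assoc, hJ₀J₀]

theorem contractibleSpace_compatibleComplexStructures [FiniteDimensional ℝ V]
    (hJ₀ : J₀ ∈ compatibleComplexStructures ω) :
    ContractibleSpace (compatibleComplexStructures ω) :=
  haveI := contractibleSpace_siegelDisk (g := ω.compl₂ (J₀ : V →ₗ[ℝ] V)) (J₀ := J₀) hJ₀.2.2
  ((compatibleComplexStructuresHomeomorphPosSymplectic hJ₀).trans
    (posSymplecticHomeomorphSiegelDisk (g := ω.compl₂ (J₀ : V →ₗ[ℝ] V)) hJ₀.2)).contractibleSpace

end CompatibleComplexStructures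

/-- **Existence and contractibility of compatible complex structures on a symplectic
vector space.**  Let `V` be a finite-dimensional real vector space and `ω` a
nondegenerate alternating bilinear form on `V`.  The space `𝒥(V,ω)` of linear complex
structures `J` on `V` such that `g_J(v,w) := ω(v, Jw)` is symmetric and positive
definite, as a subspace of the space of (continuous) linear endomorphisms of `V`,
is nonempty and contractible. -/
theorem compatible_complex_structures_nonempty_contractible
    (V : Type*) [NormedAddCommGroup V] [NormedSpace ℝ V] [FiniteDimensional ℝ V]
    (ω : V →ₗ[ℝ] V →ₗ[ℝ] ℝ)
    (halt : ∀ v, ω v v = 0)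
    (hnondeg : ∀ v, (∀ w, ω v w = 0) → v = 0) :
    ({J : V →L[ℝ] V | (∀ v, J (J v) = -v) ∧ (∀ v w, ω v (J w) = ω w (J v)) ∧
        (∀ v, v ≠ 0 → 0 < ω v (J v))}).Nonempty ∧
      ContractibleSpace {J : V →L[ℝ] V | (∀ v, J (J v) = -v) ∧
        (∀ v w, ω v (J w) = ω w (J v)) ∧ (∀ v, v ≠ 0 → 0 < ω v (J v))} := by
  obtain ⟨J₀, hJ₀⟩ := nonempty_compatibleComplexStructures halt hnondeg
  exact ⟨⟨J₀, hJ₀⟩, contractibleSpace_compatibleComplexStructures hJ₀⟩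
end

section
/- For any nonzero vectors v, w ∈ ℂⁿ ≅ ℝ^{2n}, there exists a real-linear map Y : ℂⁿ → ℂⁿ which is symmetric with respect to the standard real inner product ⟨a,b⟩ = Re Σ_{j=1}^n conj(a_j)·b_j (i.e. ⟨Ya, b⟩ = ⟨a, Yb⟩ for all a, b ∈ ℂⁿ), anticommutes with multiplication by i (i.e. Y(i·x) = −i·Y(x) for all x ∈ ℂⁿ), and satisfies Yv = w. -/
/-!
The map `Y x = ⟪x, u⟫ • z + ⟪x, z⟫ • u` is conjugate-linear since the inner product is
conjugate-linear in its first slot, and `⟪Y a, b⟫ = ⟪u, a⟫⟪z, b⟫ + ⟪z, a⟫⟪u, b⟫` is symmetric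
in `a` and `b`, so the real part of the inner product is symmetric for `Y`. Taking `u` with
`⟪v, u⟫ = 1` and `z = w - (⟪v, w⟫ / 2) • u`, each term contributes half of `⟪v, w⟫ • u` and
`Y v = w`.
-/

open Complex

open scoped InnerProductSpace

variable {E : Type*} [NormedAddCommGroup E] [InnerProductSpace ℂ E]

noncomputable def symmAntilinearRankTwo (u z : E) : E →ₗ[ℝ] E where
  toFun x := ⟪x, u⟫_ℂ • z + ⟪x, z⟫_ℂ • u
  map_add' x y := by simp only [inner_add_left, add_smul]; abel
  map_smul' r x := by
    simp only [← Complex.coe_smul, inner_smul_left, conj_ofReal, RingHom.id_apply, smul_add,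
      mul_smul]

theorem symmAntilinearRankTwo_apply (u z x : E) :
    symmAntilinearRankTwo u z x = ⟪x, u⟫_ℂ • z + ⟪x, z⟫_ℂ • u := rfl

theorem inner_symmAntilinearRankTwo_left (u z a b : E) :
    ⟪symmAntilinearRankTwo u z a, b⟫_ℂ = ⟪u, a⟫_ℂ * ⟪z, b⟫_ℂ + ⟪z, a⟫_ℂ * ⟪u, b⟫_ℂ := by
  simp only [symmAntilinearRankTwo_apply, inner_add_left, inner_smul_left, inner_conj_symm]

theorem inner_symmAntilinearRankTwo_comm (u z a b : E) :
    ⟪symmAntilinearRankTwo u z a, b⟫_ℂ = ⟪symmAntilinearRankTwo u z b, a⟫_ℂ := by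
  simp only [inner_symmAntilinearRankTwo_left]; ring

theorem re_inner_symmAntilinearRankTwo (u z a b : E) :
    (⟪symmAntilinearRankTwo u z a, b⟫_ℂ).re = (⟪a, symmAntilinearRankTwo u z b⟫_ℂ).re := by
  rw [inner_symmAntilinearRankTwo_comm, ← inner_conj_symm, conj_re]

theorem symmAntilinearRankTwo_I_smul (u z x : E) :
    symmAntilinearRankTwo u z (I • x) = -(I • symmAntilinearRankTwo u z x) := by
  simp only [symmAntilinearRankTwo_apply, inner_smul_left, conj_I, smul_add, mul_smul, neg_smul,
    neg_add]

theorem symmAntilinearRankTwo_apply_of_inner_eq_one {u v : E} (hvu : ⟪v, u⟫_ℂ = 1) (w : E) :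
    symmAntilinearRankTwo u (w - (⟪v, w⟫_ℂ / 2) • u) v = w := by
  simp only [symmAntilinearRankTwo_apply, inner_sub_right, inner_smul_right, hvu]
  module

theorem exists_inner_eq_one {v : E} (hv : v ≠ 0) : ∃ u : E, ⟪v, u⟫_ℂ = 1 :=
  ⟨(⟪v, v⟫_ℂ)⁻¹ • v, by rw [inner_smul_right, inv_mul_cancel₀ (inner_self_ne_zero.2 hv)]⟩

theorem exists_symmetric_antilinear_map_sending_general (n : ℕ)
    (v w : EuclideanSpace ℂ (Fin n)) (hv : v ≠ 0) :
    ∃ Y : EuclideanSpace ℂ (Fin n) →ₗ[ℝ] EuclideanSpace ℂ (Fin n),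
      (∀ a b : EuclideanSpace ℂ (Fin n),
        (inner ℂ (Y a) b : ℂ).re = (inner ℂ a (Y b) : ℂ).re) ∧
      (∀ x : EuclideanSpace ℂ (Fin n), Y (Complex.I • x) = -(Complex.I • Y x)) ∧
      Y v = w := by
  obtain ⟨u, hvu⟩ := exists_inner_eq_one hv
  exact ⟨_, re_inner_symmAntilinearRankTwo _ _, symmAntilinearRankTwo_I_smul _ _,
    symmAntilinearRankTwo_apply_of_inner_eq_one hvu w⟩

/-- For any nonzero `v, w ∈ ℂⁿ ≅ ℝ^{2n}` there is a real-linear map `Y : ℂⁿ → ℂⁿ` which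
is symmetric for the standard real inner product `⟨a,b⟩ = Re Σⱼ conj(aⱼ)·bⱼ`,
anticommutes with multiplication by `i`, and satisfies `Yv = w`. -/
theorem exists_symmetric_antilinear_map_sending (n : ℕ)
    (v w : EuclideanSpace ℂ (Fin n)) (hv : v ≠ 0) (hw : w ≠ 0) :
    ∃ Y : EuclideanSpace ℂ (Fin n) →ₗ[ℝ] EuclideanSpace ℂ (Fin n),
      (∀ a b : EuclideanSpace ℂ (Fin n),
        (inner ℂ (Y a) b : ℂ).re = (inner ℂ a (Y b) : ℂ).re) ∧
      (∀ x : EuclideanSpace ℂ (Fin n), Y (Complex.I • x) = -(Complex.I • Y x)) ∧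
      Y v = w :=
  exists_symmetric_antilinear_map_sending_general n v w hv
end
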